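/- Let m ≥ 3, n = 3·2^m, and S̄ = {1, 2, 4, …, 2^m, 2^m − 1} (powers of 2 up to 2^m together with 2^m − 1). Let G = C_n(S) where S = {1,…,n/2} \ S̄. Then the independence complex Δ of G is pure of dimension 2. -/

import Mathlib

/-- The "reduced absolute value" |x|_n = min(x mod n, n - x mod n). -/
def redAbs (n : ℕ) (x : ZMod n) : ℕ := min x.val (n - x.val)

/-- The circulant graph C_n(S). -/
def circulant (n : ℕ) (S : Finset ℕ) : SimpleGraph (ZMod n) :=
  SimpleGraph.fromRel (fun i j => redAbs n (j - i) ∈ S)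

/-- `s` is an independent set of C_n(S). -/
def IsIndep {n : ℕ} (S : Finset ℕ) (s : Finset (ZMod n)) : Prop :=
  ∀ x ∈ s, ∀ y ∈ s, x ≠ y → ¬ (circulant n S).Adj x y

/-- `s` is a maximal independent set of C_n(S). -/
def IsMaxIndep {n : ℕ} (S : Finset ℕ) (s : Finset (ZMod n)) : Prop :=
  IsIndep S s ∧ ∀ t : Finset (ZMod n), IsIndep S t → s ⊆ t → t = s

/-- The complement generating set S̄ = {1,…,⌊n/2⌋} \ S. -/
def Sbar (n : ℕ) (S : Finset ℕ) : Finset ℕ := Finset.Icc 1 (n / 2) \ S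

/-!
Independent sets of `C_n(S)` are the cliques of `H = C_n(S̄)`, where `n = 3N`, `N = 2^m`. Inside
`S̄` the only solutions of `a + b = c` are `2^i + 2^i = 2^(i+1)` and `1 + (N - 1) = N`.

Every edge of `H` lies in a translate of `±{0, 2^i, 2^(i+1)}` or `±{0, N - 1, N}`, so no clique with
fewer than three vertices is maximal.

`H` has no `K₄`. Cut the cycle at the four vertices of a 4-clique into gaps `g₁, …, g₄` summing to
`3N`; every gap and every sum of two consecutive gaps is `≤ N` or `≥ 2N`. If all gaps are `≤ N`,
then `g₁ + g₂` or `g₃ + g₄` equals `2N`, and so does `g₂ + g₃` or `g₄ + g₁`, which forces a gap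
`0`. Otherwise some gap is `≥ 2N`, the other three add up to at most `N`, and these three gaps
together with their consecutive partial sums all lie in `S̄`, which the classification of sums
rules out.
-/

def IsChord (n : ℕ) (T : Finset ℕ) (k : ℕ) : Prop := min k (n - k) ∈ T

section Circulant

variable {n : ℕ} {T : Finset ℕ}

lemma redAbs_natCast {k : ℕ} (hk : k < n) : redAbs n k = min k (n - k) := by
  rw [redAbs, ZMod.val_cast_of_lt hk]

lemma isChord_sub_iff {k : ℕ} (hk : k ≤ n) :
    IsChord n T (n - k) ↔ IsChord n T k := by
  rw [IsChord, IsChord, Nat.sub_sub_self hk, min_comm]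

variable [NeZero n]

lemma redAbs_neg (x : ZMod n) : redAbs n (-x) = redAbs n x := by
  rcases eq_or_ne x 0 with rfl | hx
  · rw [neg_zero]
  · rw [redAbs, redAbs, ZMod.neg_val, if_neg hx, Nat.sub_sub_self (ZMod.val_lt x).le, min_comm]

lemma redAbs_mem_Icc {x : ZMod n} (hx : x ≠ 0) : redAbs n x ∈ Finset.Icc 1 (n / 2) := by
  have := ZMod.val_pos.2 hx
  have := ZMod.val_lt x
  rw [redAbs, Finset.mem_Icc]
  omega

lemma eq_natCast_redAbs_or_eq_neg (x : ZMod n) :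
    x = (redAbs n x : ZMod n) ∨ x = -(redAbs n x : ZMod n) := by
  rcases min_choice x.val (n - x.val) with h | h <;> rw [redAbs, h]
  · exact Or.inl (ZMod.natCast_zmod_val x).symm
  · right
    rw [Nat.cast_sub (ZMod.val_lt x).le, ZMod.natCast_self, ZMod.natCast_zmod_val, zero_sub,
      neg_neg]

lemma circulant_adj_iff {x y : ZMod n} :
    (circulant n T).Adj x y ↔ x ≠ y ∧ redAbs n (y - x) ∈ T := by
  rw [circulant, SimpleGraph.fromRel_adj, ← redAbs_neg (y - x), neg_sub, or_self]

lemma circulant_adj_add_left (c : ZMod n) {x y : ZMod n} :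
    (circulant n T).Adj (c + x) (c + y) ↔ (circulant n T).Adj x y := by
  simp only [circulant_adj_iff, add_sub_add_left_eq_sub, ne_eq, add_right_inj]

lemma circulant_adj_neg {x y : ZMod n} :
    (circulant n T).Adj (-x) (-y) ↔ (circulant n T).Adj x y := by
  simp only [circulant_adj_iff, neg_sub_neg, ne_eq, neg_inj]
  rw [← redAbs_neg (x - y), neg_sub]

lemma circulant_sbar : circulant n (Sbar n T) = (circulant n T)ᶜ := by
  ext x y
  rw [SimpleGraph.compl_adj, circulant_adj_iff, circulant_adj_iff, Sbar, Finset.mem_sdiff]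
  exact ⟨fun ⟨hxy, _, h⟩ => ⟨hxy, fun h' => h h'.2⟩,
    fun ⟨hxy, h⟩ => ⟨hxy, redAbs_mem_Icc (sub_ne_zero.2 hxy.symm), fun h' => h ⟨hxy, h'⟩⟩⟩

lemma isIndep_sbar_iff {s : Finset (ZMod n)} :
    IsIndep (Sbar n T) s ↔ (circulant n T).IsClique (s : Set (ZMod n)) := by
  simp only [IsIndep, circulant_sbar, SimpleGraph.compl_adj, SimpleGraph.IsClique,
    Set.Pairwise, Finset.mem_coe]
  exact forall₂_congr fun x _ => forall₂_congr fun y _ => imp_congr_right fun hxy => by tauto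

lemma circulant_adj_natCast_iff {a b : ℕ} (hab : a < b) (hb : b < n) :
    (circulant n T).Adj (a : ZMod n) b ↔ IsChord n T (b - a) := by
  have hne : (a : ZMod n) ≠ b := fun h => hab.ne <| by
    simpa [ZMod.val_cast_of_lt (hab.trans hb), ZMod.val_cast_of_lt hb] using congrArg ZMod.val h
  rw [circulant_adj_iff, ← Nat.cast_sub hab.le, redAbs_natCast (by omega), IsChord]
  exact and_iff_right hne

lemma circulant_adj_natCast_of_sub_mem {a b : ℕ} (hab : a < b) (hb : b < n)
    (hba : 2 * (b - a) ≤ n) (h : b - a ∈ T) : (circulant n T).Adj (a : ZMod n) b := by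
  rwa [circulant_adj_natCast_iff hab hb, IsChord, min_eq_left (by omega)]

lemma circulant_exists_adj_adj_of_adj
    (hT : ∀ t ∈ T, ∃ e, (circulant n T).Adj 0 e ∧ (circulant n T).Adj (t : ZMod n) e)
    {x y : ZMod n} (hxy : (circulant n T).Adj x y) :
    ∃ z, (circulant n T).Adj x z ∧ (circulant n T).Adj y z := by
  obtain ⟨e, he0, het⟩ := hT _ (circulant_adj_iff.1 hxy).2
  obtain ⟨f, hf0, hfd⟩ : ∃ f, (circulant n T).Adj 0 f ∧ (circulant n T).Adj (y - x) f := by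
    rcases eq_natCast_redAbs_or_eq_neg (y - x) with hd | hd <;> rw [hd]
    · exact ⟨e, he0, het⟩
    · exact ⟨-e, by simpa using circulant_adj_neg.2 he0, circulant_adj_neg.2 het⟩
  refine ⟨x + f, ?_, ?_⟩
  · simpa using (circulant_adj_add_left x).2 hf0
  · simpa using (circulant_adj_add_left x).2 hfd

end Circulant

namespace SimpleGraph

variable {V : Type*} {G : SimpleGraph V} {s : Finset V}

lemma IsClique.card_lt_of_cliqueFree {k : ℕ} (hG : G.CliqueFree k)
    (hs : G.IsClique (s : Set V)) : s.card < k := by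
  by_contra! hk
  obtain ⟨t, hts, rfl⟩ := Finset.exists_subset_card_eq hk
  exact hG t ⟨hs.subset (Finset.coe_subset.2 hts), rfl⟩

lemma three_le_card_of_maximal_isClique [Nonempty V] [DecidableEq V]
    (hnbr : ∀ x, ∃ y, G.Adj x y) (htri : ∀ x y, G.Adj x y → ∃ z, G.Adj x z ∧ G.Adj y z)
    (hs : G.IsClique (s : Set V))
    (hmax : ∀ t : Finset V, G.IsClique (t : Set V) → s ⊆ t → t = s) : 3 ≤ s.card := by
  by_contra! hcard
  obtain ⟨z, hzs, hz⟩ : ∃ z ∉ s, ∀ x ∈ s, G.Adj x z := by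
    rcases (by omega : s.card = 0 ∨ s.card = 1 ∨ s.card = 2) with h | h | h
    · obtain rfl := Finset.card_eq_zero.1 h
      exact ⟨Classical.arbitrary V, by simp, by simp⟩
    · obtain ⟨x, rfl⟩ := Finset.card_eq_one.1 h
      obtain ⟨y, hxy⟩ := hnbr x
      exact ⟨y, by simpa using hxy.ne', by simpa using hxy⟩
    · obtain ⟨x, y, -, rfl⟩ := Finset.card_eq_two.1 h
      have hxy : G.Adj x y := hs (by simp) (by simp) (by rintro rfl; simp at h)
      obtain ⟨z, hxz, hyz⟩ := htri x y hxy
      exact ⟨z, by simp [hxz.ne', hyz.ne'], by simp [hxz, hyz]⟩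
  have hins : G.IsClique (insert z s : Finset V) := by
    rw [Finset.coe_insert, isClique_insert]
    exact ⟨hs, fun x hx _ => (hz x hx).symm⟩
  exact hzs (hmax _ hins (Finset.subset_insert z s) ▸ Finset.mem_insert_self z s)

end SimpleGraph

lemma Nat.eq_of_two_pow_add_two_pow_eq_two_pow {i j k : ℕ} (h : 2 ^ i + 2 ^ j = 2 ^ k) :
    i = j := by
  wlog hij : i < j generalizing i j
  · rcases (not_lt.1 hij).eq_or_lt with hji | hji
    · exact hji.symm
    · exact (this (by omega) hji).symm
  have hij' := Nat.pow_lt_pow_right (show 1 < 2 by norm_num) hij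
  have := Nat.two_pow_pos i
  have hjk : j < k := (Nat.pow_lt_pow_iff_right (a := 2) (by norm_num)).1 (by omega)
  have hkj : k < j + 1 :=
    (Nat.pow_lt_pow_iff_right (a := 2) (by norm_num)).1 (by rw [pow_succ]; omega)
  omega

def powerFamily (m : ℕ) : Finset ℕ :=
  (Finset.range (m + 1)).image (fun i => 2 ^ i) ∪ {2 ^ m - 1}

namespace powerFamily

variable {m k : ℕ}

lemma mem_iff : k ∈ powerFamily m ↔ (∃ i ≤ m, 2 ^ i = k) ∨ k = 2 ^ m - 1 := by
  simp [powerFamily, or_comm]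

lemma two_pow_mem {i : ℕ} (hi : i ≤ m) : 2 ^ i ∈ powerFamily m :=
  mem_iff.2 (Or.inl ⟨i, hi, rfl⟩)

lemma one_mem : 1 ∈ powerFamily m := two_pow_mem (Nat.zero_le m)

lemma two_pow_sub_one_mem : 2 ^ m - 1 ∈ powerFamily m := mem_iff.2 (Or.inr rfl)

lemma le_of_mem (h : k ∈ powerFamily m) : k ≤ 2 ^ m := by
  rcases mem_iff.1 h with ⟨i, hi, rfl⟩ | rfl
  · exact Nat.pow_le_pow_right (by norm_num) hi
  · exact Nat.sub_le _ _

lemma mod_four_cases (h : k ∈ powerFamily m) :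
    k = 1 ∨ k = 2 ∨ (0 < k ∧ 4 ∣ k) ∨ k = 2 ^ m - 1 := by
  rcases mem_iff.1 h with ⟨_ | _ | i, -, rfl⟩ | rfl
  · simp
  · simp
  · exact Or.inr (Or.inr (Or.inl ⟨by positivity, Dvd.intro_left (2 ^ i) (by ring)⟩))
  · simp

lemma eq_or_of_add_mem (hm : 3 ≤ m) {a b : ℕ} (ha : a ∈ powerFamily m)
    (hb : b ∈ powerFamily m) (hab : a + b ∈ powerFamily m) :
    a = b ∨ (a = 1 ∧ b = 2 ^ m - 1) ∨ (a = 2 ^ m - 1 ∧ b = 1) := by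
  have h8 : 2 ^ 3 ≤ 2 ^ m := Nat.pow_le_pow_right (by norm_num) hm
  have h4 : 2 ^ 2 ∣ 2 ^ m := pow_dvd_pow 2 (by omega)
  have := le_of_mem hab
  have := mod_four_cases ha
  have := mod_four_cases hb
  have := mod_four_cases hab
  -- residues mod 4 settle every case in which `2 ^ m - 1` occurs
  rcases mem_iff.1 ha with ⟨i, -, rfl⟩ | rfl <;> rcases mem_iff.1 hb with ⟨j, -, rfl⟩ | rfl <;>
    rcases mem_iff.1 hab with ⟨k, -, hk⟩ | hk
  · exact Or.inl (congrArg _ (Nat.eq_of_two_pow_add_two_pow_eq_two_pow hk.symm))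
  all_goals omega

lemma not_chain (hm : 3 ≤ m) {x y z : ℕ} (hx : x ∈ powerFamily m) (hy : y ∈ powerFamily m)
    (hz : z ∈ powerFamily m) (hxy : x + y ∈ powerFamily m) (hyz : y + z ∈ powerFamily m)
    (hxyz : x + y + z ∈ powerFamily m) : False := by
  have h8 : 2 ^ 3 ≤ 2 ^ m := Nat.pow_le_pow_right (by norm_num) hm
  have := mod_four_cases hx
  have := mod_four_cases hy
  have := mod_four_cases hz
  have := eq_or_of_add_mem hm hx hy hxy
  have := eq_or_of_add_mem hm hy hz hyz
  have := eq_or_of_add_mem hm hxy hz hxyz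
  have := eq_or_of_add_mem hm hx hyz (by rwa [← add_assoc])
  omega

lemma le_or_le_of_isChord (h : IsChord (3 * 2 ^ m) (powerFamily m) k) :
    k ≤ 2 ^ m ∨ 2 * 2 ^ m ≤ k := by
  have := le_of_mem h
  omega

lemma mem_of_isChord (h : IsChord (3 * 2 ^ m) (powerFamily m) k) (hk : k ≤ 2 ^ m) :
    k ∈ powerFamily m := by
  rwa [IsChord, min_eq_left (by omega)] at h

variable {a b c d : ℕ}

lemma not_gaps_of_large (hm : 3 ≤ m) (hsum : a + b + c + d = 3 * 2 ^ m)
    (hd_large : 2 * 2 ^ m ≤ d) (ha : IsChord (3 * 2 ^ m) (powerFamily m) a)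
    (hb : IsChord (3 * 2 ^ m) (powerFamily m) b) (hc : IsChord (3 * 2 ^ m) (powerFamily m) c)
    (hd : IsChord (3 * 2 ^ m) (powerFamily m) d)
    (hab : IsChord (3 * 2 ^ m) (powerFamily m) (a + b))
    (hbc : IsChord (3 * 2 ^ m) (powerFamily m) (b + c)) : False := by
  have habc : a + b + c = 3 * 2 ^ m - d := by omega
  refine not_chain hm (mem_of_isChord ha (by omega)) (mem_of_isChord hb (by omega))
    (mem_of_isChord hc (by omega)) (mem_of_isChord hab (by omega))
    (mem_of_isChord hbc (by omega))
    (habc ▸ mem_of_isChord ((isChord_sub_iff (by omega)).2 hd) (by omega))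

lemma not_gaps (hm : 3 ≤ m) (ha0 : 0 < a) (hb0 : 0 < b) (hc0 : 0 < c) (hd0 : 0 < d)
    (hsum : a + b + c + d = 3 * 2 ^ m) (ha : IsChord (3 * 2 ^ m) (powerFamily m) a)
    (hb : IsChord (3 * 2 ^ m) (powerFamily m) b) (hc : IsChord (3 * 2 ^ m) (powerFamily m) c)
    (hd : IsChord (3 * 2 ^ m) (powerFamily m) d)
    (hab : IsChord (3 * 2 ^ m) (powerFamily m) (a + b))
    (hbc : IsChord (3 * 2 ^ m) (powerFamily m) (b + c))
    (hcd : IsChord (3 * 2 ^ m) (powerFamily m) (c + d))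
    (hda : IsChord (3 * 2 ^ m) (powerFamily m) (d + a)) : False := by
  by_cases hd_large : 2 * 2 ^ m ≤ d
  · exact not_gaps_of_large hm hsum hd_large ha hb hc hd hab hbc
  by_cases ha_large : 2 * 2 ^ m ≤ a
  · exact not_gaps_of_large hm (by omega) ha_large hb hc hd ha hbc hcd
  by_cases hb_large : 2 * 2 ^ m ≤ b
  · exact not_gaps_of_large hm (by omega) hb_large hc hd ha hb hcd hda
  by_cases hc_large : 2 * 2 ^ m ≤ c
  · exact not_gaps_of_large hm (by omega) hc_large hd ha hb hc hda hab
  have := le_or_le_of_isChord ha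
  have := le_or_le_of_isChord hb
  have := le_or_le_of_isChord hc
  have := le_or_le_of_isChord hd
  have := le_or_le_of_isChord hab
  have := le_or_le_of_isChord hbc
  omega

lemma not_four_sorted (hm : 3 ≤ m) {p q r s : ℕ} (hpq : p < q) (hqr : q < r) (hrs : r < s)
    (hs : s < 3 * 2 ^ m) (hqp : IsChord (3 * 2 ^ m) (powerFamily m) (q - p))
    (hrq : IsChord (3 * 2 ^ m) (powerFamily m) (r - q))
    (hsr : IsChord (3 * 2 ^ m) (powerFamily m) (s - r))
    (hrp : IsChord (3 * 2 ^ m) (powerFamily m) (r - p))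
    (hsq : IsChord (3 * 2 ^ m) (powerFamily m) (s - q))
    (hsp : IsChord (3 * 2 ^ m) (powerFamily m) (s - p)) : False := by
  refine not_gaps hm (a := q - p) (b := r - q) (c := s - r) (d := 3 * 2 ^ m - (s - p))
    (by omega) (by omega) (by omega) (by omega) (by omega) hqp hrq hsr
    ((isChord_sub_iff (by omega)).2 hsp) (by rwa [show q - p + (r - q) = r - p by omega])
    (by rwa [show r - q + (s - r) = s - q by omega]) ?_ ?_
  · rw [show s - r + (3 * 2 ^ m - (s - p)) = 3 * 2 ^ m - (r - p) by omega]
    exact (isChord_sub_iff (by omega)).2 hrp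
  · rw [show 3 * 2 ^ m - (s - p) + (q - p) = 3 * 2 ^ m - (s - q) by omega]
    exact (isChord_sub_iff (by omega)).2 hsq

lemma cliqueFree_four (hm : 3 ≤ m) : (circulant (3 * 2 ^ m) (powerFamily m)).CliqueFree 4 := by
  intro t ht
  have hcard : (t.image ZMod.val).card = 4 := by
    rw [Finset.card_image_of_injective _ (ZMod.val_injective _), ht.card_eq]
  set v := (t.image ZMod.val).orderEmbOfFin hcard
  have hv : ∀ i, (v i : ZMod (3 * 2 ^ m)) ∈ t ∧ v i < 3 * 2 ^ m := fun i => by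
    obtain ⟨x, hx, hxv⟩ := Finset.mem_image.1 (Finset.orderEmbOfFin_mem _ hcard i)
    rw [← hxv, ZMod.natCast_zmod_val]
    exact ⟨hx, ZMod.val_lt x⟩
  have hchord : ∀ i j, i < j → IsChord (3 * 2 ^ m) (powerFamily m) (v j - v i) := fun i j hij =>
    (circulant_adj_natCast_iff (v.strictMono hij) (hv j).2).1 <|
      ht.isClique (hv i).1 (hv j).1 fun h => (v.strictMono hij).ne <| by
        simpa [ZMod.val_cast_of_lt (hv i).2, ZMod.val_cast_of_lt (hv j).2]
          using congrArg ZMod.val h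
  exact not_four_sorted hm (v.strictMono (by decide : (0 : Fin 4) < 1))
    (v.strictMono (by decide : (1 : Fin 4) < 2)) (v.strictMono (by decide : (2 : Fin 4) < 3))
    (hv 3).2 (hchord 0 1 (by decide)) (hchord 1 2 (by decide)) (hchord 2 3 (by decide))
    (hchord 0 2 (by decide)) (hchord 1 3 (by decide)) (hchord 0 3 (by decide))

lemma circulant_adj_of_sub_mem {a b : ℕ} (hab : a < b) (hb : b ≤ 2 ^ m)
    (h : b - a ∈ powerFamily m) : (circulant (3 * 2 ^ m) (powerFamily m)).Adj (a : ZMod _) b := by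
  have := Nat.two_pow_pos m
  exact circulant_adj_natCast_of_sub_mem hab (by omega) (by omega) h

lemma circulant_adj_zero_of_mem {b : ℕ} (hb : b ∈ powerFamily m) (hb0 : 0 < b) :
    (circulant (3 * 2 ^ m) (powerFamily m)).Adj 0 (b : ZMod _) := by
  simpa using circulant_adj_of_sub_mem hb0 (le_of_mem hb) (by simpa using hb)

lemma circulant_adj_two_pow_sub_one (hm : 1 ≤ m) :
    (circulant (3 * 2 ^ m) (powerFamily m)).Adj ((2 ^ m - 1 : ℕ) : ZMod _) (2 ^ m : ℕ) := by
  have := Nat.one_lt_two_pow (n := m) (by omega)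
  refine circulant_adj_of_sub_mem (by omega) le_rfl ?_
  rw [Nat.sub_sub_self (by omega)]
  exact one_mem

lemma isNClique_three (hm : 1 ≤ m) :
    (circulant (3 * 2 ^ m) (powerFamily m)).IsNClique 3
      {0, ((2 ^ m - 1 : ℕ) : ZMod _), ((2 ^ m : ℕ) : ZMod _)} := by
  have := Nat.one_lt_two_pow (n := m) (by omega)
  exact SimpleGraph.is3Clique_triple_iff.2
    ⟨circulant_adj_zero_of_mem two_pow_sub_one_mem (by omega),
      circulant_adj_zero_of_mem (two_pow_mem le_rfl) (by omega), circulant_adj_two_pow_sub_one hm⟩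

lemma exists_adj_zero_adj_of_mem (hm : 1 ≤ m) {t : ℕ} (ht : t ∈ powerFamily m) :
    ∃ e, (circulant (3 * 2 ^ m) (powerFamily m)).Adj 0 e ∧
      (circulant (3 * 2 ^ m) (powerFamily m)).Adj (t : ZMod _) e := by
  have := Nat.one_lt_two_pow (n := m) (by omega)
  rcases mem_iff.1 ht with ⟨i, hi, rfl⟩ | rfl
  · rcases hi.lt_or_eq with hi | rfl
    · have hlt := Nat.pow_lt_pow_right (show 1 < 2 by norm_num) (Nat.lt_succ_self i)
      refine ⟨(2 ^ (i + 1) : ℕ), circulant_adj_zero_of_mem (two_pow_mem hi) (by positivity),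
        circulant_adj_of_sub_mem hlt (Nat.pow_le_pow_right (by norm_num) hi) ?_⟩
      rw [pow_succ, mul_two, Nat.add_sub_cancel]
      exact two_pow_mem hi.le
    · exact ⟨(2 ^ i - 1 : ℕ), circulant_adj_zero_of_mem two_pow_sub_one_mem (by omega),
        (circulant_adj_two_pow_sub_one hm).symm⟩
  · exact ⟨(2 ^ m : ℕ), circulant_adj_zero_of_mem (two_pow_mem le_rfl) (by omega),
      circulant_adj_two_pow_sub_one hm⟩

lemma circulant_exists_adj (x : ZMod (3 * 2 ^ m)) :
    ∃ y, (circulant (3 * 2 ^ m) (powerFamily m)).Adj x y :=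
  ⟨x + 1, by simpa using (circulant_adj_add_left x).2 (circulant_adj_zero_of_mem
    (m := m) one_mem one_pos)⟩

end powerFamily

theorem power_family_pure (m n : ℕ) (hm : 3 ≤ m) (hn : n = 3 * 2 ^ m)
    (Sb S : Finset ℕ)
    (hSb : Sb = (Finset.range (m + 1)).image (fun i => 2 ^ i) ∪ {2 ^ m - 1})
    (hS : S = Finset.Icc 1 (n / 2) \ Sb) :
    (∃ s : Finset (ZMod n), IsIndep S s ∧ s.card = 3) ∧
    (∀ s : Finset (ZMod n), IsMaxIndep S s → s.card = 3) := by
  subst hn hSb hS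
  have hindep (s : Finset (ZMod (3 * 2 ^ m))) :
      IsIndep (Sbar (3 * 2 ^ m) (powerFamily m)) s ↔
        (circulant (3 * 2 ^ m) (powerFamily m)).IsClique (s : Set _) :=
    isIndep_sbar_iff
  have htri := powerFamily.isNClique_three (m := m) (by omega)
  refine ⟨⟨_, (hindep _).2 htri.isClique, htri.card_eq⟩, fun s ⟨hs, hmax⟩ => ?_⟩
  have hclique := (hindep s).1 hs
  refine le_antisymm (Nat.lt_succ_iff.1 (hclique.card_lt_of_cliqueFree
    (powerFamily.cliqueFree_four hm))) ?_
  exact SimpleGraph.three_le_card_of_maximal_isClique powerFamily.circulant_exists_adj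
    (fun _ _ => circulant_exists_adj_adj_of_adj fun _ => powerFamily.exists_adj_zero_adj_of_mem
      (by omega)) hclique fun t ht hst => hmax t ((hindep t).2 ht) hst
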